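/- Suppose V = 0. Then there exists ε₀ > 0 such that for every 0 < ε < ε₀ there exist a real constant u₀ and a real constant m₀ > 0 satisfying u₀ + H(0) = m₀^α + ε·m₀ and m₀ = 1 − ε·u₀; in particular the constant pair (u, m) = (u₀, m₀) solves Problem 1 with V = 0. -/

import Mathlib

open Set intervalIntegral

noncomputable section

/-- `f : ℝ → ℝ` is ½-Hölder continuous: there is `K ≥ 0` with
`|f x - f y| ≤ K * |x - y| ^ (1/2)` for all `x y`. -/
def IsHolderHalf (f : ℝ → ℝ) : Prop :=
  ∃ K : ℝ, 0 ≤ K ∧ ∀ x y : ℝ, |f x - f y| ≤ K * |x - y| ^ ((1 : ℝ) / 2)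

/-- `f` is a 1-periodic function of class `C²` (a `C²` function on the torus `𝕋`). -/
def MemC2T (f : ℝ → ℝ) : Prop :=
  Function.Periodic f 1 ∧ ContDiff ℝ 2 f

/-- `f ∈ C^{2,1/2}(𝕋)`: 1-periodic, of class `C²`, with ½-Hölder continuous
second derivative. -/
def MemC2HalfT (f : ℝ → ℝ) : Prop :=
  MemC2T f ∧ IsHolderHalf (deriv (deriv f))

/-- `(u, m)` is a solution of Problem 1 with Hamiltonian `H`, potential `V`,
exponent `α` and parameter `ε`: `u, m` are 1-periodic `C²` functions, `m > 0`
everywhere, and the system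
`u - u'' + H(u') + V = m^α + ε (m - m'')`,
`m - m'' - (H'(u') m)' = 1 - ε (u - u'')`
holds pointwise. -/
def SolvesMFG (H V : ℝ → ℝ) (α ε : ℝ) (u m : ℝ → ℝ) : Prop :=
  MemC2T u ∧ MemC2T m ∧ (∀ x, 0 < m x) ∧
  (∀ x : ℝ, u x - deriv (deriv u) x + H (deriv u x) + V x
      = m x ^ α + ε * (m x - deriv (deriv m) x)) ∧
  (∀ x : ℝ, m x - deriv (deriv m) x
      - deriv (fun y => deriv H (deriv u y) * m y) x
      = 1 - ε * (u x - deriv (deriv u) x))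

/- For constant `u, m` every derivative vanishes, so the system reduces to two algebraic equations.
Eliminating `u₀ = (1 - m₀) / ε` leaves `m₀ + ε m₀^α + ε² m₀ = 1 + ε H(0)`, whose left side
vanishes at `0` and dominates `m₀`; so the intermediate value theorem gives a root in
`(0, 1 + ε H(0)]` once `ε < 1 / (1 + |H(0)|)` makes the right side positive. -/

theorem solvesMFG_const (H : ℝ → ℝ) (v α ε u₀ m₀ : ℝ) (hm₀ : 0 < m₀)
    (hu : u₀ + H 0 + v = m₀ ^ α + ε * m₀) (hm : m₀ = 1 - ε * u₀) :
    SolvesMFG H (fun _ => v) α ε (fun _ => u₀) (fun _ => m₀) := by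
  refine ⟨⟨fun _ => rfl, contDiff_const⟩, ⟨fun _ => rfl, contDiff_const⟩, fun _ => hm₀,
    fun _ => ?_, fun _ => ?_⟩ <;>
  simp only [deriv_const', sub_zero] <;> linarith

theorem exists_pos_add_mul_rpow_add_mul_eq {α a b c : ℝ} (hα : 0 < α) (ha : 0 ≤ a)
    (hb : 0 ≤ b) (hc : 0 < c) : ∃ m, 0 < m ∧ m + a * m ^ α + b * m = c := by
  set g : ℝ → ℝ := fun m => m + a * m ^ α + b * m
  have hg : ContinuousOn g (Icc 0 c) :=
    (continuous_id.add (continuous_const.mul (continuous_id.rpow_const fun _ => Or.inr hα.le))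
      |>.add (continuous_const.mul continuous_id)).continuousOn
  have hg0 : g 0 = 0 := by simp [g, Real.zero_rpow hα.ne']
  have hgc : c ≤ g c := by
    have : 0 ≤ a * c ^ α := mul_nonneg ha (Real.rpow_nonneg hc.le α)
    simp only [g]; nlinarith
  obtain ⟨m, hm, hgm⟩ :=
    intermediate_value_Icc hc.le hg (show c ∈ Icc (g 0) (g c) from ⟨hg0.symm ▸ hc.le, hgc⟩)
  refine ⟨m, hm.1.lt_of_ne ?_, hgm⟩
  rintro rfl
  exact hc.ne' (hgm.symm.trans hg0)

theorem exists_const_solution {α ε h : ℝ} (hα : 0 < α) (hε : 0 < ε) (hpos : 0 < 1 + ε * h) :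
    ∃ u₀ m₀ : ℝ, 0 < m₀ ∧ u₀ + h = m₀ ^ α + ε * m₀ ∧ m₀ = 1 - ε * u₀ := by
  obtain ⟨m₀, hm₀, hroot⟩ :=
    exists_pos_add_mul_rpow_add_mul_eq hα hε.le (sq_nonneg ε) hpos
  have hu₀ : (1 - m₀) / ε = m₀ ^ α + ε * m₀ - h := by
    rw [div_eq_iff hε.ne']
    linear_combination -hroot
  exact ⟨(1 - m₀) / ε, m₀, hm₀, by linarith, by field_simp; ring⟩

theorem existence_V_zero (α : ℝ) (hα : 0 < α) (H : ℝ → ℝ) :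
    ∃ ε₀ > 0, ∀ ε : ℝ, 0 < ε → ε < ε₀ →
      ∃ u₀ m₀ : ℝ, 0 < m₀ ∧ u₀ + H 0 = m₀ ^ α + ε * m₀ ∧ m₀ = 1 - ε * u₀ ∧
        SolvesMFG H (fun _ => 0) α ε (fun _ => u₀) (fun _ => m₀) := by
  refine ⟨1 / (1 + |H 0|), by positivity, fun ε hε hεlt => ?_⟩
  have hpos : 0 < 1 + ε * H 0 := by
    rw [lt_div_iff₀ (by positivity)] at hεlt
    nlinarith [neg_abs_le (H 0)]
  obtain ⟨u₀, m₀, hm₀, hu, hm⟩ := exists_const_solution hα hε hpos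
  exact ⟨u₀, m₀, hm₀, hu, hm, solvesMFG_const H 0 α ε u₀ m₀ hm₀ (by linarith) hm⟩
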